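/- Consider ℝ² split into two one-dimensional blocks and L = (1,1). The three triples (x₁,g₁,f₁) = ((−1,0),(−1,0),1/2), (x₂,g₂,f₂) = ((0,0),(0,−1),0), (x₃,g₃,f₃) = ((1,0),(1,0),1/2) satisfy, for all i, j ∈ {1,2,3} and both blocks ℓ ∈ {1,2}, the interpolation inequalities f_i ≥ f_j + ⟨g_j, x_i − x_j⟩ + (1/(2L_ℓ))‖g_i^{(ℓ)} − g_j^{(ℓ)}‖²; nevertheless there exists no function f ∈ F^coord_{0,(1,1)}(ℝ²) such that f(x_i) = f_i and ∇f(x_i) = g_i for i = 1, 2, 3. Hence these interpolation conditions are not sufficient for sets of cardinality three. -/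

import Mathlib

/-!
Suppose `f` interpolates the data. The tangent planes at `x₁` and `x₃` have horizontal gradients,
so convexity gives `f(±1, 1/2) ≥ 1/2`. Along the vertical line through `x₂`, where `∂₂f = -1`, the
descent lemma for the `1`-Lipschitz partial derivative gives `f(0, 1/2) ≤ -3/8`. Applying the
descent lemma along the horizontal line `y = 1/2` in both directions from `(0, 1/2)` gives
`f(1, 1/2) + f(-1, 1/2) ≤ 2 f(0, 1/2) + 1 ≤ 1/4`, contradicting `f(1, 1/2) + f(-1, 1/2) ≥ 1`.
-/

open RealInnerProductSpace

noncomputable section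

/-- Membership in the class `F^coord_{0,(1,1)}(ℝ²)`: convex, differentiable, and each of the two
partial derivatives is `1`-Lipschitz along its own coordinate. -/
def IsCoordSmooth2 (f : EuclideanSpace ℝ (Fin 2) → ℝ) : Prop :=
  ConvexOn ℝ Set.univ f ∧ Differentiable ℝ f ∧
    ∀ (ℓ : Fin 2) (x : EuclideanSpace ℝ (Fin 2)) (h : ℝ),
      |gradient f (x + h • EuclideanSpace.single ℓ 1) ℓ - gradient f x ℓ| ≤ |h|

/-- The three points `x₁ = (-1,0)`, `x₂ = (0,0)`, `x₃ = (1,0)`. -/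
def X : Fin 3 → EuclideanSpace ℝ (Fin 2) :=
  ![(WithLp.equiv 2 (Fin 2 → ℝ)).symm ![-1, 0],
    (WithLp.equiv 2 (Fin 2 → ℝ)).symm ![0, 0],
    (WithLp.equiv 2 (Fin 2 → ℝ)).symm ![1, 0]]

/-- The three gradients `g₁ = (-1,0)`, `g₂ = (0,-1)`, `g₃ = (1,0)`. -/
def G : Fin 3 → EuclideanSpace ℝ (Fin 2) :=
  ![(WithLp.equiv 2 (Fin 2 → ℝ)).symm ![-1, 0],
    (WithLp.equiv 2 (Fin 2 → ℝ)).symm ![0, -1],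
    (WithLp.equiv 2 (Fin 2 → ℝ)).symm ![1, 0]]

/-- The three function values `f₁ = 1/2`, `f₂ = 0`, `f₃ = 1/2`. -/
def F : Fin 3 → ℝ := ![1/2, 0, 1/2]

open scoped NNReal

theorem ConvexOn.add_apply_sub_le_of_hasFDerivAt {E : Type*} [NormedAddCommGroup E]
    [NormedSpace ℝ E] {f : E → ℝ} {f' : E →L[ℝ] ℝ} {x : E} (hf : ConvexOn ℝ Set.univ f)
    (hf' : HasFDerivAt f f' x) (y : E) : f x + f' (y - x) ≤ f y := by
  have hline : HasDerivAt (f ∘ AffineMap.lineMap (k := ℝ) x y) (f' (y - x)) 0 := by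
    have hf0 : HasFDerivAt f f' (AffineMap.lineMap (k := ℝ) x y 0) := by simpa using hf'
    exact hf0.comp_hasDerivAt 0 AffineMap.hasDerivAt_lineMap
  have := (hf.comp_affineMap (AffineMap.lineMap x y)).le_slope_of_hasDerivAt
    (Set.mem_univ 0) (Set.mem_univ 1) one_pos hline
  simp only [slope_def_field, Function.comp_apply, AffineMap.lineMap_apply_zero,
    AffineMap.lineMap_apply_one, sub_zero, div_one] at this
  linarith

theorem le_add_deriv_mul_add_sq_of_lipschitzWith {φ : ℝ → ℝ} {L : ℝ≥0}
    (hφ : Differentiable ℝ φ) (hL : LipschitzWith L (deriv φ)) (x y : ℝ) :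
    φ y ≤ φ x + deriv φ x * (y - x) + L / 2 * (y - x) ^ 2 := by
  set ψ : ℝ → ℝ := fun t => L / 2 * t ^ 2 - φ t
  have hψ : ∀ u, HasDerivAt ψ (L * u - deriv φ u) u := fun u =>
    (((hasDerivAt_pow 2 u).const_mul (L / 2 : ℝ)).sub (hφ u).hasDerivAt).congr_deriv
      (by push_cast; ring)
  have hconv : ConvexOn ℝ Set.univ ψ := by
    refine Monotone.convexOn_univ_of_deriv (fun u => (hψ u).differentiableAt) fun s t hst => ?_
    have := hL.dist_le_mul t s
    rw [Real.dist_eq, Real.dist_eq, abs_of_nonneg (sub_nonneg.2 hst)] at this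
    rw [(hψ s).deriv, (hψ t).deriv]
    linarith [le_abs_self (deriv φ t - deriv φ s)]
  have := hconv.add_apply_sub_le_of_hasFDerivAt (hψ x).hasFDerivAt y
  simp only [ψ, ContinuousLinearMap.toSpanSingleton_apply, smul_eq_mul] at this
  nlinarith

section InnerProductSpace

variable {E : Type*} [NormedAddCommGroup E] [InnerProductSpace ℝ E] [CompleteSpace E]

theorem ConvexOn.add_inner_gradient_le {f : E → ℝ} {x : E} (hf : ConvexOn ℝ Set.univ f)
    (hdiff : DifferentiableAt ℝ f x) (y : E) : f x + ⟪gradient f x, y - x⟫ ≤ f y := by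
  simpa using hf.add_apply_sub_le_of_hasFDerivAt hdiff.hasGradientAt.hasFDerivAt y

theorem HasGradientAt.hasDerivAt_comp_add_smul {f : E → ℝ} {g x v : E} {t : ℝ}
    (hf : HasGradientAt f g (x + t • v)) :
    HasDerivAt (fun s : ℝ => f (x + s • v)) ⟪g, v⟫ t := by
  have hline : HasDerivAt (fun s : ℝ => x + s • v) v t := by
    simpa using ((hasDerivAt_id t).smul_const v).const_add x
  simpa [Function.comp_def] using hf.hasFDerivAt.comp_hasDerivAt t hline

theorem le_add_inner_gradient_add_sq_of_lipschitzWith {f : E → ℝ} (hf : Differentiable ℝ f)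
    {x v : E} {L : ℝ≥0} (hL : LipschitzWith L fun t : ℝ => ⟪gradient f (x + t • v), v⟫)
    (h : ℝ) : f (x + h • v) ≤ f x + h * ⟪gradient f x, v⟫ + L / 2 * h ^ 2 := by
  have hderiv : ∀ t : ℝ, HasDerivAt (fun s : ℝ => f (x + s • v)) ⟪gradient f (x + t • v), v⟫ t :=
    fun t => (hf _).hasGradientAt.hasDerivAt_comp_add_smul
  have hφ : deriv (fun s : ℝ => f (x + s • v)) = fun t => ⟪gradient f (x + t • v), v⟫ :=
    funext fun t => (hderiv t).deriv
  have := le_add_deriv_mul_add_sq_of_lipschitzWith (fun t => (hderiv t).differentiableAt)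
    (hφ ▸ hL) 0 h
  simpa [hφ, mul_comm] using this

end InnerProductSpace

theorem toLp_add_smul_single_zero (a b h : ℝ) :
    !₂[a, b] + h • EuclideanSpace.single 0 1 = !₂[a + h, b] := by
  ext i; fin_cases i <;> simp

theorem toLp_add_smul_single_one (a b h : ℝ) :
    !₂[a, b] + h • EuclideanSpace.single 1 1 = !₂[a, b + h] := by
  ext i; fin_cases i <;> simp

theorem IsCoordSmooth2.add_smul_single_le {f : EuclideanSpace ℝ (Fin 2) → ℝ}
    (hf : IsCoordSmooth2 f) (ℓ : Fin 2) (x : EuclideanSpace ℝ (Fin 2)) (h : ℝ) :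
    f (x + h • EuclideanSpace.single ℓ 1) ≤ f x + h * gradient f x ℓ + h ^ 2 / 2 := by
  obtain ⟨-, hdiff, hlip⟩ := hf
  have hL : LipschitzWith 1 fun t : ℝ =>
      ⟪gradient f (x + t • EuclideanSpace.single ℓ 1), EuclideanSpace.single ℓ 1⟫ := by
    refine LipschitzWith.of_dist_le_mul fun s t => ?_
    have := hlip ℓ (x + t • EuclideanSpace.single ℓ 1) (s - t)
    rw [add_assoc, ← add_smul, add_sub_cancel] at this
    simpa only [EuclideanSpace.inner_single_right, one_mul, conj_trivial, Real.dist_eq,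
      NNReal.coe_one] using this
  have := le_add_inner_gradient_add_sq_of_lipschitzWith hdiff hL h
  simp only [EuclideanSpace.inner_single_right, one_mul, conj_trivial, NNReal.coe_one] at this
  linarith

theorem IsCoordSmooth2.add_mul_gradient_le_add_smul_single {f : EuclideanSpace ℝ (Fin 2) → ℝ}
    (hf : IsCoordSmooth2 f) (ℓ : Fin 2) (x : EuclideanSpace ℝ (Fin 2)) (h : ℝ) :
    f x + h * gradient f x ℓ ≤ f (x + h • EuclideanSpace.single ℓ 1) := by
  have := hf.1.add_inner_gradient_le (hf.2.1 x) (x + h • EuclideanSpace.single ℓ 1)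
  rwa [add_sub_cancel_left, inner_smul_right, EuclideanSpace.inner_single_right, one_mul,
    conj_trivial] at this

theorem interpolation_inequalities (i j : Fin 3) (ℓ : Fin 2) :
    F i ≥ F j + ⟪G j, X i - X j⟫ + 1 / 2 * |G i ℓ - G j ℓ| ^ 2 := by
  fin_cases i <;> fin_cases j <;> fin_cases ℓ <;>
    norm_num [F, X, G, PiLp.inner_apply, Fin.sum_univ_two]

theorem interpolation_conditions_not_sufficient_three_points :
    (∀ (i j : Fin 3) (ℓ : Fin 2),
      F i ≥ F j + ⟪G j, X i - X j⟫ + 1 / 2 * |G i ℓ - G j ℓ| ^ 2) ∧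
    ¬ ∃ f : EuclideanSpace ℝ (Fin 2) → ℝ, IsCoordSmooth2 f ∧
        ∀ i : Fin 3, f (X i) = F i ∧ gradient f (X i) = G i := by
  refine ⟨interpolation_inequalities, ?_⟩
  rintro ⟨f, hf, hinterp⟩
  have h_center : f !₂[0, 1 / 2] ≤ -3 / 8 := by
    have := hf.add_smul_single_le 1 (X 1) (1 / 2)
    rw [(hinterp 1).1, (hinterp 1).2] at this
    norm_num [X, F, G, toLp_add_smul_single_one] at this
    linarith
  have h_right : 1 / 2 ≤ f !₂[1, 1 / 2] := by
    have := hf.add_mul_gradient_le_add_smul_single 1 (X 2) (1 / 2)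
    rw [(hinterp 2).1, (hinterp 2).2] at this
    simpa [X, F, G, toLp_add_smul_single_one] using this
  have h_left : 1 / 2 ≤ f !₂[-1, 1 / 2] := by
    have := hf.add_mul_gradient_le_add_smul_single 1 (X 0) (1 / 2)
    rw [(hinterp 0).1, (hinterp 0).2] at this
    simpa [X, F, G, toLp_add_smul_single_one] using this
  have h_step_right := hf.add_smul_single_le 0 !₂[0, 1 / 2] 1
  have h_step_left := hf.add_smul_single_le 0 !₂[0, 1 / 2] (-1)
  rw [toLp_add_smul_single_zero] at h_step_right h_step_left
  norm_num at h_step_right h_step_left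
  linarith
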